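/- Let A > 0 and k > 0. If ∫₀^{π/2} ((A·k)^{−1/4}·(A·cos θ) − (A·cos θ)^{3/4})·cos θ dθ = 0, then k = (√π · Γ(15/8) / (2 · Γ(11/8)))⁴, where Γ is the real Gamma function. -/

import Mathlib

/-!
Substituting `x = sin² θ` turns `∫₀^{π/2} cos^p θ dθ` into `B(1/2, (p+1)/2) / 2`, so
`∫₀^{π/2} cos^{7/4} θ dθ = Γ(1/2) Γ(11/8) / (2 Γ(15/8))` with `Γ(1/2) = √π`. Since `A > 0`,
the Galerkin condition reads `(A k)^{-1/4} A π/4 = A^{3/4} ∫₀^{π/2} cos^{7/4} θ dθ`; the powers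
of `A` cancel and `k^{-1/4} = 2 Γ(11/8) / (√π Γ(15/8))`.
-/

open Real MeasureTheory Set

theorem integral_rpow_mul_one_sub_rpow {a b : ℝ} (ha : 0 < a) (hb : 0 < b) :
    ∫ x in (0:ℝ)..1, x ^ (a - 1) * (1 - x) ^ (b - 1) = Gamma a * Gamma b / Gamma (a + b) := by
  have hβ := Complex.betaIntegral_eq_Gamma_mul_div a b (by simpa) (by simpa)
  rw [Complex.betaIntegral, ← Complex.ofReal_add, Complex.Gamma_ofReal, Complex.Gamma_ofReal,
    Complex.Gamma_ofReal] at hβ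
  rw [← Complex.ofReal_inj, ← intervalIntegral.integral_ofReal]
  push_cast
  rw [← hβ]
  refine intervalIntegral.integral_congr fun x hx => ?_
  rw [uIcc_of_le zero_le_one] at hx
  push_cast [Complex.ofReal_cpow hx.1, Complex.ofReal_cpow (sub_nonneg.2 hx.2)]
  rfl

theorem injOn_sin_sq : InjOn (fun θ => sin θ ^ 2) (Ioo 0 (π/2)) := by
  intro θ₁ h₁ θ₂ h₂ h
  have hIcc : Ioo 0 (π/2) ⊆ Icc (-(π/2)) (π/2) :=
    Ioo_subset_Icc_self.trans (Icc_subset_Icc (by linarith [pi_pos]) le_rfl)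
  have hsin_nonneg {θ : ℝ} (hθ : θ ∈ Ioo 0 (π/2)) : 0 ≤ sin θ :=
    sin_nonneg_of_nonneg_of_le_pi hθ.1.le (by linarith [hθ.2, pi_pos])
  exact injOn_sin (hIcc h₁) (hIcc h₂) ((sq_eq_sq₀ (hsin_nonneg h₁) (hsin_nonneg h₂)).1 h)

theorem image_sin_sq_Ioo : (fun θ => sin θ ^ 2) '' Ioo 0 (π/2) = Ioo 0 1 := by
  ext x
  constructor
  · rintro ⟨θ, hθ, rfl⟩
    have hsin : 0 < sin θ := sin_pos_of_pos_of_lt_pi hθ.1 (by linarith [hθ.2, pi_pos])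
    have hcos : 0 < cos θ := cos_pos_of_mem_Ioo ⟨by linarith [hθ.1, pi_pos], hθ.2⟩
    exact ⟨by positivity, by nlinarith [sin_sq_add_cos_sq θ]⟩
  · intro hx
    have hsqrt : √x < 1 := (sqrt_lt' one_pos).2 (by simpa using hx.2)
    refine ⟨arcsin √x, ⟨arcsin_pos.2 (sqrt_pos.2 hx.1), arcsin_lt_pi_div_two.2 hsqrt⟩, ?_⟩
    simp only
    rw [sin_arcsin (by linarith [sqrt_nonneg x]) hsqrt.le, sq_sqrt hx.1.le]

theorem integral_cos_rpow_eq_half_mul_integral (p : ℝ) :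
    ∫ θ in (0:ℝ)..π/2, cos θ ^ p
      = 1/2 * ∫ x in (0:ℝ)..1, x ^ ((1/2:ℝ) - 1) * (1 - x) ^ ((p + 1)/2 - 1) := by
  have hsubst := integral_image_eq_integral_abs_deriv_smul (f' := fun θ => 2 * sin θ * cos θ)
    measurableSet_Ioo
    (fun θ _ => ((hasDerivAt_sin θ).fun_pow 2).hasDerivWithinAt.congr_deriv (by ring))
    injOn_sin_sq (fun x => x ^ ((1/2:ℝ) - 1) * (1 - x) ^ ((p + 1)/2 - 1))
  rw [image_sin_sq_Ioo] at hsubst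
  rw [intervalIntegral.integral_of_le zero_le_one, integral_Ioc_eq_integral_Ioo, hsubst,
    intervalIntegral.integral_of_le (by positivity), integral_Ioc_eq_integral_Ioo,
    ← integral_const_mul]
  refine setIntegral_congr_fun measurableSet_Ioo fun θ hθ => ?_
  have hsin : 0 < sin θ := sin_pos_of_pos_of_lt_pi hθ.1 (by linarith [hθ.2, pi_pos])
  have hcos : 0 < cos θ := cos_pos_of_mem_Ioo ⟨by linarith [hθ.1, pi_pos], hθ.2⟩
  rw [← cos_sq', ← rpow_natCast_mul hsin.le, ← rpow_natCast_mul hcos.le,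
    abs_of_pos (by positivity), smul_eq_mul]
  norm_num
  rw [show 2 * ((p + 1)/2 - 1) = p - 1 by ring, rpow_sub_one hcos.ne', rpow_neg_one]
  field_simp

theorem integral_cos_rpow {p : ℝ} (hp : -1 < p) :
    ∫ θ in (0:ℝ)..π/2, cos θ ^ p = √π * Gamma ((p + 1)/2) / (2 * Gamma (p/2 + 1)) := by
  rw [integral_cos_rpow_eq_half_mul_integral,
    integral_rpow_mul_one_sub_rpow one_half_pos (by linarith), Gamma_one_half_eq,
    show 1/2 + (p + 1)/2 = p/2 + 1 by ring]
  ring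

theorem integral_sub_rpow_mul_cos {A α : ℝ} (hA : 0 ≤ A) (hα : -1 < α) (c : ℝ) :
    ∫ θ in (0:ℝ)..π/2, (c * (A * cos θ) - (A * cos θ) ^ α) * cos θ
      = c * A * (π/4) - A ^ α * ∫ θ in (0:ℝ)..π/2, cos θ ^ (α + 1) := by
  have hcont : Continuous fun θ => cos θ ^ (α + 1) :=
    continuous_cos.rpow_const fun _ => Or.inr (by linarith)
  have hcongr : ∀ θ ∈ uIcc 0 (π/2), (c * (A * cos θ) - (A * cos θ) ^ α) * cos θ
      = c * A * cos θ ^ 2 - A ^ α * cos θ ^ (α + 1) := by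
    intro θ hθ
    rw [uIcc_of_le (by positivity)] at hθ
    have hcos : 0 ≤ cos θ := cos_nonneg_of_mem_Icc ⟨by linarith [hθ.1, pi_pos], hθ.2⟩
    rw [mul_rpow hA hcos, rpow_add' hcos (by linarith), rpow_one]
    ring
  rw [intervalIntegral.integral_congr hcongr, intervalIntegral.integral_sub
    (Continuous.intervalIntegrable (by fun_prop) _ _) ((hcont.intervalIntegrable _ _).const_mul _),
    intervalIntegral.integral_const_mul, intervalIntegral.integral_const_mul, integral_cos_sq,
    cos_pi_div_two, sin_zero]
  ring

/-- Determination of the location constant for the fractional-power oscillator: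
if the Galerkin integral vanishes, then `k = (√π·Γ(15/8)/(2·Γ(11/8)))⁴`. -/
theorem fractional_location_constant (A k : ℝ) (hA : 0 < A) (hk : 0 < k)
    (hB : ∫ θ in (0:ℝ)..(π/2),
        ((A * k) ^ (-(1:ℝ)/4) * (A * Real.cos θ) - (A * Real.cos θ) ^ ((3:ℝ)/4)) * Real.cos θ
          = 0) :
    k = (Real.sqrt π * Real.Gamma (15/8) / (2 * Real.Gamma (11/8))) ^ 4 := by
  have hI : ∫ θ in (0:ℝ)..π/2, cos θ ^ ((3:ℝ)/4 + 1)
      = √π * Gamma (11/8) / (2 * Gamma (15/8)) := by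
    rw [integral_cos_rpow (by norm_num)]
    norm_num
  rw [integral_sub_rpow_mul_cos hA.le (by norm_num), hI] at hB
  have hAk : (A * k) ^ (-(1:ℝ)/4) * A = A ^ ((3:ℝ)/4) * k ^ (-(1:ℝ)/4) := by
    rw [mul_rpow hA.le hk.le, show (3:ℝ)/4 = -1/4 + 1 by norm_num, rpow_add_one hA.ne']
    ring
  have hfreq : k ^ (-(1:ℝ)/4) * (π/4) = √π * Gamma (11/8) / (2 * Gamma (15/8)) := by
    have hA34 : A ^ ((3:ℝ)/4) ≠ 0 := (rpow_pos_of_pos hA _).ne'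
    refine sub_eq_zero.1 ((mul_eq_zero.1 ?_).resolve_left hA34)
    linear_combination hB - (π/4) * hAk
  have hroot : k ^ (4:ℝ)⁻¹ = √π * Gamma (15/8) / (2 * Gamma (11/8)) := by
    rw [← inv_inj, ← rpow_neg hk.le, inv_div, eq_div_iff (by positivity),
      show -(4:ℝ)⁻¹ = -1/4 by norm_num]
    apply mul_left_cancel₀ (sqrt_pos.2 pi_pos).ne'
    linear_combination (k ^ (-(1:ℝ)/4) * Gamma (15/8)) * sq_sqrt pi_pos.le
      + 2 * (eq_div_iff (by positivity)).1 hfreq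
  rw [← rpow_natCast, Nat.cast_ofNat]
  exact (rpow_inv_eq hk.le (by positivity) four_ne_zero).1 hroot
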